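/- arXiv:2007.13452 — 3 statements merged into one kernel-verified Lean document; each statement's English description precedes it below -/
import Mathlib

section
/- Let L ≥ 2 be an integer and P_s > 0 a real number. Among all pairs (ρ_R, ρ_N) of positive real numbers satisfying the average power constraint ρ_R + (L−1)·ρ_N = L·P_s, the quantity φ_N = 1/(1/ρ_N + 1/ρ_R) attains its maximum value L·P_s/(L + 2·√(L−1)) uniquely at ρ_R* = L·P_s/(1 + √(L−1)) and ρ_N* = L·P_s/(L − 1 + √(L−1)). -/
/-! Write `s = √(L-1)`, so that `L + 2s = (1+s)²`. For `a, b > 0` the identity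
`(a + s²b)(a + b) = (1+s)²·ab + (a - sb)²` shows that `ab/(a+b) ≤ (a + s²b)/(1+s)²`, with
equality exactly when `a = sb`. Under the power constraint the right-hand side is the constant
`L·Ps/(L + 2s)`, and `a = sb` together with the constraint pins down `(a, b)`. -/

section ParallelSum

variable {a b : ℝ}

lemma one_div_one_div_add_one_div (ha : 0 < a) (hb : 0 < b) :
    1 / (1 / b + 1 / a) = a * b / (a + b) := by
  field_simp

lemma mul_div_add_le (ha : 0 < a) (hb : 0 < b) {s : ℝ} (hs : 1 + s ≠ 0) :
    a * b / (a + b) ≤ (a + s ^ 2 * b) / (1 + s) ^ 2 := by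
  rw [div_le_div_iff₀ (by positivity) (by positivity)]
  nlinarith [sq_nonneg (a - s * b)]

lemma mul_div_add_eq_iff (ha : 0 < a) (hb : 0 < b) {s : ℝ} (hs : 1 + s ≠ 0) :
    a * b / (a + b) = (a + s ^ 2 * b) / (1 + s) ^ 2 ↔ a = s * b := by
  rw [div_eq_div_iff (by positivity) (by positivity)]
  constructor
  · intro h
    have hsq : (a - s * b) ^ 2 = 0 := by linear_combination -h
    linear_combination pow_eq_zero_iff two_ne_zero |>.mp hsq
  · rintro rfl
    ring

end ParallelSum

lemma eq_div_of_add_sq_mul_eq {s M a b : ℝ} (hs : 0 < s) (hM : a + s ^ 2 * b = M)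
    (hab : a = s * b) : a = M / (1 + s) ∧ b = M / (s ^ 2 + s) := by
  constructor
  · rw [eq_div_iff (by positivity)]
    linear_combination hM + s * hab
  · rw [eq_div_iff (by positivity)]
    linear_combination hM - hab

/-- Optimality of the GDM power allocation: among all positive pairs `(ρR, ρN)` with
`ρR + (L-1)·ρN = L·Ps`, the quantity `φN = 1/(1/ρN + 1/ρR)` attains its maximum
`L·Ps/(L + 2√(L-1))` uniquely at `ρR* = L·Ps/(1+√(L-1))` and `ρN* = L·Ps/(L-1+√(L-1))`. -/
theorem gdm_power_allocation_optimal (L : ℕ) (hL : 2 ≤ L) (Ps : ℝ) (hPs : 0 < Ps) :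
    let ρR : ℝ := (L : ℝ) * Ps / (1 + Real.sqrt ((L : ℝ) - 1))
    let ρN : ℝ := (L : ℝ) * Ps / ((L : ℝ) - 1 + Real.sqrt ((L : ℝ) - 1))
    (0 < ρR ∧ 0 < ρN ∧ ρR + ((L : ℝ) - 1) * ρN = (L : ℝ) * Ps) ∧
    1 / (1 / ρN + 1 / ρR) = (L : ℝ) * Ps / ((L : ℝ) + 2 * Real.sqrt ((L : ℝ) - 1)) ∧
    ∀ a b : ℝ, 0 < a → 0 < b → a + ((L : ℝ) - 1) * b = (L : ℝ) * Ps →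
      1 / (1 / b + 1 / a) ≤ (L : ℝ) * Ps / ((L : ℝ) + 2 * Real.sqrt ((L : ℝ) - 1)) ∧
      (1 / (1 / b + 1 / a) = (L : ℝ) * Ps / ((L : ℝ) + 2 * Real.sqrt ((L : ℝ) - 1)) →
        a = ρR ∧ b = ρN) := by
  intro ρR ρN
  have hL1 : (0 : ℝ) < L - 1 := by
    have : (2 : ℝ) ≤ L := by exact_mod_cast hL
    linarith
  obtain ⟨s, hs_def⟩ : ∃ s, s = Real.sqrt ((L : ℝ) - 1) := ⟨_, rfl⟩
  have hs : 0 < s := hs_def ▸ Real.sqrt_pos.mpr hL1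
  have hLs : (L : ℝ) - 1 = s ^ 2 := by rw [hs_def, Real.sq_sqrt hL1.le]
  have hmax : (L : ℝ) + 2 * s = (1 + s) ^ 2 := by linear_combination hLs
  have hsne : 1 + s ≠ 0 := by positivity
  simp only [ρR, ρN]
  rw [← hs_def, hLs, hmax]
  set M := (L : ℝ) * Ps
  have hM : 0 < M := by positivity
  have hρR : 0 < M / (1 + s) := by positivity
  have hρN : 0 < M / (s ^ 2 + s) := by positivity
  have hopt : M / (1 + s) = s * (M / (s ^ 2 + s)) := by field_simp; ring
  have hsum : M / (1 + s) + s ^ 2 * (M / (s ^ 2 + s)) = M := by field_simp; ring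
  refine ⟨⟨hρR, hρN, hsum⟩, ?_, fun a b ha hb hab => ⟨?_, fun heq => ?_⟩⟩
  · rw [one_div_one_div_add_one_div hρR hρN, (mul_div_add_eq_iff hρR hρN hsne).mpr hopt, hsum]
  · rw [one_div_one_div_add_one_div ha hb, ← hab]
    exact mul_div_add_le ha hb hsne
  · rw [one_div_one_div_add_one_div ha hb, ← hab, mul_div_add_eq_iff ha hb hsne] at heq
    exact eq_div_of_add_sq_mul_eq hs hab heq
end

section
/- Let M ≥ 2 be an integer, X_M = {exp(2πi(t−1)/M) : t = 1,…,M} ⊂ ℂ, and γ1, γ2 > 0. Fix x1 ∈ X_M. Then the minimum of γ1·Re(1 − conj(x1)·xv) + γ2·Re(1 − conj(xr)·xv) over all xv, xr ∈ X_M with xv ≠ x1 and xr ≠ x1 equals 2·γ1·sin²(π/M), and it is attained exactly when xr = xv and xv ∈ {x1·exp(2πi/M), x1·exp(−2πi/M)}. -/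
/-- The `M`-ary PSK alphabet `{exp(2πi(t-1)/M) : t = 1,…,M}`. -/
noncomputable def pskAlphabet (M : ℕ) : Set ℂ :=
  {z | ∃ t : Fin M, z = Complex.exp (2 * Real.pi * Complex.I * ((t : ℕ) : ℂ) / (M : ℂ))}

/-!
Every PSK symbol is an `M`-th root of unity, hence of modulus one, so the second term is
`γ2 ‖xr - xv‖² / 2` and the first is `γ1 Re(1 - z)` for the nontrivial `M`-th root of unity
`z = conj x1 * xv`. Writing `z = ζ ^ r` with `ζ = exp(2πi/M)` and `0 < r < M` gives
`Re(1 - z) = 2 sin²(πr/M)`, and `sin²(πr/M) - sin²(π/M) = sin(π(r+1)/M) sin(π(r-1)/M)` is a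
product of two non-negative factors that vanishes only for `r = 1` or `r = M - 1`.
-/

open Real ComplexConjugate

theorem pow_eq_one_of_mem_pskAlphabet {M : ℕ} {x : ℂ} (hx : x ∈ pskAlphabet M) :
    x ^ M = 1 := by
  obtain ⟨t, rfl⟩ := hx
  have hM : (M : ℂ) ≠ 0 := Nat.cast_ne_zero.mpr t.pos.ne'
  rw [← Complex.exp_nat_mul, Complex.exp_eq_one_iff]
  exact ⟨(t : ℕ), by push_cast; field_simp⟩

theorem Complex.conj_mul_eq_iff {x y w : ℂ} (hx : ‖x‖ = 1) :
    conj x * y = w ↔ y = x * w := by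
  constructor
  · rintro rfl
    rw [← mul_assoc, mul_conj', hx]
    simp
  · rintro rfl
    rw [← mul_assoc, conj_mul', hx]
    simp

theorem Complex.re_one_sub_conj_mul {x y : ℂ} (hx : ‖x‖ = 1) (hy : ‖y‖ = 1) :
    (1 - conj x * y).re = ‖x - y‖ ^ 2 / 2 := by
  have hre : (conj x * y).re = (x * conj y).re := by
    rw [← Complex.conj_re, map_mul, Complex.conj_conj]
  rw [Complex.sq_norm, Complex.normSq_sub, Complex.sub_re, Complex.one_re, hre,
    Complex.normSq_eq_norm_sq, Complex.normSq_eq_norm_sq, hx, hy]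
  ring

theorem re_one_sub_exp_pow (M r : ℕ) :
    (1 - Complex.exp (2 * π * Complex.I / M) ^ r).re = 2 * sin (π * r / M) ^ 2 := by
  have harg :
      (r : ℂ) * (2 * π * Complex.I / M) = ((2 * (π * r / M) : ℝ) : ℂ) * Complex.I := by
    push_cast
    ring
  rw [← Complex.exp_nat_mul, harg, Complex.sub_re, Complex.one_re, Complex.exp_ofReal_mul_I_re,
    cos_two_mul, ← sin_sq_add_cos_sq (π * r / M)]
  ring

theorem Real.sin_sq_sub_sin_sq (x y : ℝ) :
    sin x ^ 2 - sin y ^ 2 = sin (x + y) * sin (x - y) := by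
  rw [sin_add, sin_sub]
  nlinarith [sin_sq_add_cos_sq x, sin_sq_add_cos_sq y]

theorem sin_pi_mul_div_nonneg {k M : ℕ} (hk : k ≤ M) : 0 ≤ sin (π * k / M) := by
  rw [mul_div_assoc]
  refine sin_nonneg_of_nonneg_of_le_pi (by positivity) (mul_le_of_le_one_right pi_pos.le ?_)
  exact div_le_one_of_le₀ (by exact_mod_cast hk) (Nat.cast_nonneg M)

theorem sin_pi_mul_div_eq_zero_iff {k M : ℕ} (hk : k ≤ M) :
    sin (π * k / M) = 0 ↔ k = 0 ∨ k = M := by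
  rcases Nat.eq_zero_or_pos k with rfl | hk0
  · simp
  rcases hk.eq_or_lt with rfl | hkM
  · simp [mul_div_cancel_right₀ π (Nat.cast_ne_zero.mpr hk0.ne')]
  have hk0' : (0 : ℝ) < k := by exact_mod_cast hk0
  have hkM' : (k : ℝ) < M := by exact_mod_cast hkM
  have hpos : 0 < sin (π * k / M) := by
    refine sin_pos_of_pos_of_lt_pi (div_pos (by positivity) (hk0'.trans hkM')) ?_
    rw [mul_div_assoc]
    exact mul_lt_of_lt_one_right pi_pos ((div_lt_one (hk0'.trans hkM')).mpr hkM')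
  simp [hpos.ne', hk0.ne', hkM.ne]

theorem sin_sq_pi_div_le {M r : ℕ} (hr : 1 ≤ r) (hrM : r < M) :
    sin (π / M) ^ 2 ≤ sin (π * r / M) ^ 2 ∧
      (sin (π * r / M) ^ 2 = sin (π / M) ^ 2 ↔ r = 1 ∨ r + 1 = M) := by
  have key : sin (π * r / M) ^ 2 - sin (π / M) ^ 2 =
      sin (π * ↑(r + 1) / M) * sin (π * ↑(r - 1) / M) := by
    rw [sin_sq_sub_sin_sq, Nat.cast_sub hr]
    push_cast
    ring_nf
  have h₁ := sin_pi_mul_div_nonneg (M := M) (Nat.succ_le_of_lt hrM)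
  have h₂ := sin_pi_mul_div_nonneg (M := M) (k := r - 1) (by omega)
  refine ⟨by nlinarith [mul_nonneg h₁ h₂], ?_⟩
  rw [← sub_eq_zero, key, mul_eq_zero, sin_pi_mul_div_eq_zero_iff (Nat.succ_le_of_lt hrM),
    sin_pi_mul_div_eq_zero_iff (by omega)]
  omega

theorem two_mul_sin_sq_le_re_one_sub {M : ℕ} (hM : 2 ≤ M) {z : ℂ} (hz : z ^ M = 1)
    (hz1 : z ≠ 1) :
    2 * sin (π / M) ^ 2 ≤ (1 - z).re ∧
      ((1 - z).re = 2 * sin (π / M) ^ 2 ↔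
        z = Complex.exp (2 * π * Complex.I / M) ∨
          z = Complex.exp (-(2 * π * Complex.I) / M)) := by
  set ζ := Complex.exp (2 * π * Complex.I / M)
  have hζ : IsPrimitiveRoot ζ M := Complex.isPrimitiveRoot_exp M (by omega)
  have : NeZero M := ⟨by omega⟩
  obtain ⟨r, hrM, rfl⟩ := hζ.eq_pow_of_pow_eq_one hz
  have hr : 1 ≤ r := Nat.one_le_iff_ne_zero.mpr (by rintro rfl; exact hz1 (pow_zero ζ))
  obtain ⟨hle, heq⟩ := sin_sq_pi_div_le hr hrM
  have h_succ : ζ ^ r = ζ ↔ r = 1 :=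
    ⟨fun h => hζ.pow_inj hrM (by omega) (h.trans (pow_one ζ).symm),
      by rintro rfl; exact pow_one ζ⟩
  have h_pred : ζ ^ r = Complex.exp (-(2 * π * Complex.I) / M) ↔ r + 1 = M := by
    rw [neg_div, Complex.exp_neg, ← mul_eq_one_iff_eq_inv₀ (Complex.exp_ne_zero _),
      ← pow_succ, hζ.pow_eq_one_iff_dvd]
    exact ⟨fun h => le_antisymm hrM (Nat.le_of_dvd r.succ_pos h), fun h => h ▸ dvd_rfl⟩
  rw [re_one_sub_exp_pow, h_succ, h_pred, ← heq]
  exact ⟨by linarith, by constructor <;> intro <;> linarith⟩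

theorem mul_le_mul_add_mul_and_eq_iff {a A B γ₁ γ₂ : ℝ} (hA : a ≤ A) (hB : 0 ≤ B)
    (h₁ : 0 < γ₁) (h₂ : 0 < γ₂) :
    γ₁ * a ≤ γ₁ * A + γ₂ * B ∧ (γ₁ * A + γ₂ * B = γ₁ * a ↔ A = a ∧ B = 0) := by
  refine ⟨by nlinarith, fun h => ?_, fun ⟨hA, hB⟩ => by rw [hA, hB, mul_zero, add_zero]⟩
  have h' : γ₁ * (A - a) + γ₂ * B = 0 := by linarith
  rw [add_eq_zero_iff_of_nonneg (by nlinarith) (by positivity), mul_eq_zero, mul_eq_zero,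
    sub_eq_zero] at h'
  exact ⟨h'.1.resolve_left h₁.ne', h'.2.resolve_left h₂.ne'⟩

/-- Problem (P2.2): the minimum of `γ1·Re(1 - conj(x1)·xv) + γ2·Re(1 - conj(xr)·xv)`
over `xv, xr ∈ X_M` with `xv ≠ x1`, `xr ≠ x1` equals `2γ1 sin²(π/M)`, attained exactly
when `xr = xv` and `xv` is a nearest neighbor of `x1`. -/
theorem psk_erroneous_relaying_min_P22 (M : ℕ) (hM : 2 ≤ M) (γ1 γ2 : ℝ)
    (hγ1 : 0 < γ1) (hγ2 : 0 < γ2) (x1 : ℂ) (hx1 : x1 ∈ pskAlphabet M) :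
    ∀ xv ∈ pskAlphabet M, ∀ xr ∈ pskAlphabet M, xv ≠ x1 → xr ≠ x1 →
      (2 * γ1 * Real.sin (Real.pi / M) ^ 2 ≤
        γ1 * (1 - (starRingEnd ℂ) x1 * xv).re + γ2 * (1 - (starRingEnd ℂ) xr * xv).re) ∧
      (γ1 * (1 - (starRingEnd ℂ) x1 * xv).re + γ2 * (1 - (starRingEnd ℂ) xr * xv).re =
          2 * γ1 * Real.sin (Real.pi / M) ^ 2 ↔
        xr = xv ∧
          (xv = x1 * Complex.exp (2 * Real.pi * Complex.I / (M : ℂ)) ∨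
           xv = x1 * Complex.exp (-(2 * Real.pi * Complex.I) / (M : ℂ)))) := by
  intro xv hxv xr hxr hv _
  have hnorm {x : ℂ} (hx : x ∈ pskAlphabet M) : ‖x‖ = 1 :=
    Complex.norm_eq_one_of_pow_eq_one (pow_eq_one_of_mem_pskAlphabet hx) (by omega)
  have hroot : (conj x1 * xv) ^ M = 1 := by
    rw [mul_pow, ← map_pow, pow_eq_one_of_mem_pskAlphabet hx1,
      pow_eq_one_of_mem_pskAlphabet hxv, map_one, one_mul]
  have hne : conj x1 * xv ≠ 1 := by rwa [Ne, Complex.conj_mul_eq_iff (hnorm hx1), mul_one]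
  obtain ⟨hle, heq⟩ := two_mul_sin_sq_le_re_one_sub hM hroot hne
  have hB := Complex.re_one_sub_conj_mul (hnorm hxr) (hnorm hxv)
  rw [mul_comm 2 γ1, mul_assoc]
  refine (mul_le_mul_add_mul_and_eq_iff hle (hB ▸ by positivity) hγ1 hγ2).imp_right
    (·.trans ?_)
  rw [heq, hB, div_eq_zero_iff, sq_eq_zero_iff, norm_eq_zero, sub_eq_zero,
    Complex.conj_mul_eq_iff (hnorm hx1), Complex.conj_mul_eq_iff (hnorm hx1)]
  simp only [two_ne_zero, or_false]
  exact and_comm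
end

section
/- Let M ≥ 2 be an integer and set s = sin(π/M) and κ = cos(π/M)/sin(π/M). Then the function P(γ) = (M−1)/M − √( γ·s² / (1 + γ·s²) ) · ( 1/2 + (1/π)·arctan( √( γ·s² / (1 + γ·s²) ) · κ ) ) is strictly decreasing on [0, ∞). -/
/-- The average SER of coherent M-PSK over a Rayleigh fading channel is strictly
decreasing in the average SNR `γ` on `[0, ∞)`. -/
theorem mpsk_rayleigh_ser_strictAnti (M : ℕ) (hM : 2 ≤ M) :
    StrictAntiOn
      (fun γ : ℝ =>
        ((M : ℝ) - 1) / M -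
          Real.sqrt (γ * Real.sin (Real.pi / M) ^ 2 / (1 + γ * Real.sin (Real.pi / M) ^ 2)) *
            (1 / 2 + (1 / Real.pi) *
              Real.arctan
                (Real.sqrt (γ * Real.sin (Real.pi / M) ^ 2 /
                    (1 + γ * Real.sin (Real.pi / M) ^ 2)) *
                  (Real.cos (Real.pi / M) / Real.sin (Real.pi / M)))))
      (Set.Ici 0) := by
  have hMpos : (0:ℝ) < M := by positivity
  have hπM : (0:ℝ) < Real.pi / M := by positivity
  have hπM2 : Real.pi / M ≤ Real.pi / 2 := by
    apply div_le_div_of_nonneg_left Real.pi_pos.le (by norm_num)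
    exact_mod_cast hM
  have hsin : 0 < Real.sin (Real.pi / M) :=
    Real.sin_pos_of_pos_of_lt_pi hπM (lt_of_le_of_lt hπM2 (by linarith [Real.pi_pos]))
  have hcos : 0 ≤ Real.cos (Real.pi / M) :=
    Real.cos_nonneg_of_mem_Icc ⟨by linarith, hπM2⟩
  set s2 := Real.sin (Real.pi / M) ^ 2 with hs2
  have hs2pos : 0 < s2 := by positivity
  set κ := Real.cos (Real.pi / M) / Real.sin (Real.pi / M) with hκ
  have hκ0 : 0 ≤ κ := div_nonneg hcos hsin.le
  intro a ha b hb hab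
  simp only [Set.mem_Ici] at ha hb
  have hda : (0:ℝ) < 1 + a * s2 := by positivity
  have hdb : (0:ℝ) < 1 + b * s2 := by positivity
  have hta : 0 ≤ a * s2 / (1 + a * s2) := by positivity
  have htab : a * s2 / (1 + a * s2) < b * s2 / (1 + b * s2) := by
    rw [div_lt_div_iff₀ hda hdb]; nlinarith
  have hu : Real.sqrt (a * s2 / (1 + a * s2)) < Real.sqrt (b * s2 / (1 + b * s2)) :=
    Real.sqrt_lt_sqrt hta htab
  set ua := Real.sqrt (a * s2 / (1 + a * s2)) with hua
  set ub := Real.sqrt (b * s2 / (1 + b * s2)) with hub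
  have hua0 : 0 ≤ ua := Real.sqrt_nonneg _
  have hub0 : 0 < ub := lt_of_le_of_lt hua0 hu
  have hA0 : 0 < 1 / 2 + (1 / Real.pi) * Real.arctan (ua * κ) := by
    have : (0:ℝ) ≤ Real.arctan (ua * κ) := by
      rw [← Real.arctan_zero]
      exact Real.arctan_strictMono.monotone (by positivity)
    have hπ := Real.pi_pos
    positivity
  have hAB : 1 / 2 + (1 / Real.pi) * Real.arctan (ua * κ)
      ≤ 1 / 2 + (1 / Real.pi) * Real.arctan (ub * κ) := by
    have harc : Real.arctan (ua * κ) ≤ Real.arctan (ub * κ) :=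
      Real.arctan_strictMono.monotone (by nlinarith)
    have hπ := Real.pi_pos
    have : (0:ℝ) ≤ 1 / Real.pi := by positivity
    nlinarith
  have key : ua * (1 / 2 + (1 / Real.pi) * Real.arctan (ua * κ))
      < ub * (1 / 2 + (1 / Real.pi) * Real.arctan (ub * κ)) :=
    calc ua * (1 / 2 + (1 / Real.pi) * Real.arctan (ua * κ))
        < ub * (1 / 2 + (1 / Real.pi) * Real.arctan (ua * κ)) :=
          mul_lt_mul_of_pos_right hu hA0
      _ ≤ ub * (1 / 2 + (1 / Real.pi) * Real.arctan (ub * κ)) :=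
          mul_le_mul_of_nonneg_left hAB hub0.le
  simp only
  linarith [key]
end
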